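/- arXiv:2207.08107 — 2 statements merged into one kernel-verified Lean document; each statement's English description precedes it below -/
import Mathlib

section
/- Let R be a Noetherian integral domain, I an ideal of R, and x ∈ R an element such that x^{l+1} ∈ I^l for infinitely many positive integers l. Then x is integral over the ideal I, i.e., there exist n ≥ 1 and elements a_j ∈ I^j (for j = 1, …, n) with x^n + a_1 x^{n-1} + ⋯ + a_n = 0. -/
open Polynomial

lemma aux_mem_sum {R : Type*} [CommRing R] (s : Finset ℕ) (M : ℕ → Ideal R)
    {i : ℕ} (hi : i ∈ s) {y : R} (hy : y ∈ M i) : y ∈ ∑ j ∈ s, M j := by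
  classical
  rw [← Finset.insert_erase hi, Finset.sum_insert (Finset.notMem_erase _ _),
    Submodule.add_eq_sup, Submodule.mem_sup]
  exact ⟨y, hy, 0, Submodule.zero_mem _, add_zero y⟩

lemma aux_sum_repr {R : Type*} [CommRing R] (s : Finset ℕ) (M : ℕ → Ideal R) :
    ∀ y ∈ ∑ j ∈ s, M j, ∃ f : ℕ → R, (∀ i ∈ s, f i ∈ M i) ∧ ∑ i ∈ s, f i = y := by
  classical
  induction s using Finset.induction with
  | empty =>
    intro y hy
    rw [Finset.sum_empty] at hy
    refine ⟨fun _ => 0, fun i hi => absurd hi (Finset.notMem_empty i), ?_⟩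
    rw [Finset.sum_empty]
    symm
    simpa using hy
  | @insert a s ha ih =>
    intro y hy
    rw [Finset.sum_insert ha, Submodule.add_eq_sup, Submodule.mem_sup] at hy
    obtain ⟨u, hu, v, hv, rfl⟩ := hy
    obtain ⟨f, hf, hfs⟩ := ih v hv
    refine ⟨fun i => if i = a then u else f i, fun i hi => ?_, ?_⟩
    · dsimp only
      by_cases he : i = a
      · subst he; rw [if_pos rfl]; exact hu
      · rw [if_neg he]; exact hf i ((Finset.mem_insert.mp hi).resolve_left he)
    · dsimp only
      rw [Finset.sum_insert ha, if_pos rfl]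
      congr 1
      rw [Finset.sum_congr rfl fun i hi => if_neg (by rintro rfl; exact ha hi), hfs]

theorem stmt_2 (R : Type*) [CommRing R] [IsDomain R] [IsNoetherianRing R]
    (I : Ideal R) (x : R)
    (h : ∀ N : ℕ, ∃ l : ℕ, N < l ∧ x ^ (l + 1) ∈ I ^ l) :
    ∃ n : ℕ, 1 ≤ n ∧ ∃ a : ℕ → R,
      (∀ j, 1 ≤ j → j ≤ n → a j ∈ I ^ j) ∧
      x ^ n + ∑ j ∈ Finset.Icc 1 n, a j * x ^ (n - j) = 0 := by
  classical
  set S := reesAlgebra I with hS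
  -- generating sets
  let G : ℕ → Set S := fun N =>
    {p | ∃ l ≤ N, x ^ (l + 1) ∈ I ^ l ∧ (p : R[X]) = Polynomial.monomial l (x ^ (l + 1))}
  have hmono : Monotone fun N => Ideal.span (G N) := by
    intro a b hab
    apply Ideal.span_mono
    rintro p ⟨l, hl, h1, h2⟩
    exact ⟨l, hl.trans hab, h1, h2⟩
  obtain ⟨N, hN⟩ := monotone_stabilizes_iff_noetherian.mpr (inferInstance : IsNoetherianRing S)
    ⟨fun N => Ideal.span (G N), hmono⟩
  obtain ⟨m, hNm, hxm⟩ := h N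
  -- the target graded family
  let T : ℕ → Ideal R := fun k =>
    ∑ l ∈ Finset.range (N + 1), I ^ (k - l) * Ideal.span {x ^ (l + 1)}
  -- multiplication rule
  have Tmul : ∀ (i j k : ℕ), i + j = k → ∀ c ∈ I ^ i, ∀ y ∈ T j, c * y ∈ T k := by
    intro i j k hijk c hc y hy
    obtain ⟨f, hf, hfs⟩ := aux_sum_repr _ _ y hy
    rw [← hfs, Finset.mul_sum]
    apply Submodule.sum_mem
    intro l hl
    have hfl := hf l hl
    rw [Ideal.mem_mul_span_singleton] at hfl
    obtain ⟨z, hz, hzx⟩ := hfl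
    have : c * f l = (c * z) * x ^ (l + 1) := by rw [← hzx]; ring
    rw [this]
    refine aux_mem_sum _ _ hl ?_
    refine Ideal.mul_mem_mul ?_ (Ideal.mem_span_singleton_self _)
    have h1 : c * z ∈ I ^ (i + (j - l)) := by
      rw [pow_add]; exact Ideal.mul_mem_mul hc hz
    exact Ideal.pow_le_pow_right (by omega) h1
  -- the ideal of the Rees algebra whose coefficients lie in T
  let W : Ideal S :=
    { carrier := {p : S | ∀ k, (p : R[X]).coeff k ∈ T k}
      add_mem' := by
        intro p q hp hq k
        have : ((p + q : S) : R[X]).coeff k = (p : R[X]).coeff k + (q : R[X]).coeff k := by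
          push_cast; rw [Polynomial.coeff_add]
        rw [this]
        exact add_mem (hp k) (hq k)
      zero_mem' := by intro k; simp
      smul_mem' := by
        intro c p hp k
        rw [smul_eq_mul]
        show ((c * p : S) : R[X]).coeff k ∈ T k
        have : ((c * p : S) : R[X]) = (c : R[X]) * (p : R[X]) := rfl
        rw [this, Polynomial.coeff_mul]
        apply Submodule.sum_mem
        rintro ⟨i, j⟩ hij
        exact Tmul i j k (Finset.HasAntidiagonal.mem_antidiagonal.mp hij) _ (c.2 i) _ (hp j) }
  have hGW : Ideal.span (G N) ≤ W := by
    rw [Ideal.span_le]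
    rintro p ⟨l, hl, h1, h2⟩
    intro k
    show (p : R[X]).coeff k ∈ T k
    rw [h2, Polynomial.coeff_monomial]
    split_ifs with hlk
    · subst hlk
      refine aux_mem_sum _ _ (Finset.mem_range.mpr (Nat.lt_succ_of_le hl)) ?_
      have h1 : (1 : R) ∈ I ^ (l - l) := by
        rw [Nat.sub_self, pow_zero, Ideal.one_eq_top]; exact Submodule.mem_top
      simpa using Ideal.mul_mem_mul h1 (Ideal.mem_span_singleton_self (x ^ (l + 1)))
    · exact Submodule.zero_mem _
  -- the element x^{m+1} X^m
  have hgm : (⟨Polynomial.monomial m (x ^ (m + 1)), reesAlgebra.monomial_mem.mpr hxm⟩ : S)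
      ∈ Ideal.span (G N) := by
    have h1 : (⟨Polynomial.monomial m (x ^ (m + 1)), reesAlgebra.monomial_mem.mpr hxm⟩ : S)
        ∈ Ideal.span (G m) := Ideal.subset_span ⟨m, le_refl m, hxm, rfl⟩
    have heq : Ideal.span (G N) = Ideal.span (G m) := hN m hNm.le
    rw [heq]
    exact h1
  have hkey : x ^ (m + 1) ∈ T m := by
    have := hGW hgm m
    simpa [Polynomial.coeff_monomial] using this
  -- extract representation
  obtain ⟨f, hf, hfs⟩ := aux_sum_repr _ _ _ hkey
  -- get coefficients c l with f l = c l * x^{l+1}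
  choose c hc hcx using fun l (hl : l ∈ Finset.range (N + 1)) =>
    Ideal.mem_mul_span_singleton.mp (hf l hl)
  -- define a
  let c' : ℕ → R := fun l => if hl : l ∈ Finset.range (N + 1) then c l hl else 0
  have hc' : ∀ l ∈ Finset.range (N + 1), c' l ∈ I ^ (m - l) := by
    intro l hl; simp only [c', dif_pos hl]; exact hc l hl
  have hcx' : ∀ l ∈ Finset.range (N + 1), c' l * x ^ (l + 1) = f l := by
    intro l hl; simp only [c', dif_pos hl]; exact hcx l hl
  refine ⟨m + 1, by omega, fun j => if j ≤ m ∧ m - j ≤ N then -(c' (m - j)) else 0, ?_, ?_⟩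
  · intro j hj1 hj2
    dsimp only
    split_ifs with hcond
    · obtain ⟨hjm, hmjN⟩ := hcond
      have he : m - (m - j) = j := by omega
      refine neg_mem ?_
      have := hc' (m - j) (Finset.mem_range.mpr (by omega))
      rwa [he] at this
    · exact Submodule.zero_mem _
  · have hsub : (Finset.range (N + 1)).image (fun l => m - l) ⊆ Finset.Icc 1 (m + 1) := by
      intro j hj
      obtain ⟨l, hl, rfl⟩ := Finset.mem_image.mp hj
      rw [Finset.mem_range] at hl
      rw [Finset.mem_Icc]
      omega
    have hzero : ∀ j ∈ Finset.Icc 1 (m + 1),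
        j ∉ (Finset.range (N + 1)).image (fun l => m - l) →
        (if j ≤ m ∧ m - j ≤ N then -(c' (m - j)) else 0) * x ^ (m + 1 - j) = 0 := by
      intro j hj hjn
      rw [Finset.mem_Icc] at hj
      rw [if_neg, zero_mul]
      rintro ⟨hjm, hmjN⟩
      exact hjn (Finset.mem_image.mpr ⟨m - j, Finset.mem_range.mpr (by omega), by omega⟩)
    have hinj : ∀ l1 ∈ Finset.range (N + 1), ∀ l2 ∈ Finset.range (N + 1),
        m - l1 = m - l2 → l1 = l2 := by
      intro l1 hl1 l2 hl2 he
      rw [Finset.mem_range] at hl1 hl2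
      omega
    have hstep : ∑ j ∈ Finset.Icc 1 (m + 1),
        (if j ≤ m ∧ m - j ≤ N then -(c' (m - j)) else 0) * x ^ (m + 1 - j)
        = ∑ l ∈ Finset.range (N + 1),
          (if m - l ≤ m ∧ m - (m - l) ≤ N then -(c' (m - (m - l))) else 0)
            * x ^ (m + 1 - (m - l)) := by
      rw [← Finset.sum_subset hsub hzero]
      exact Finset.sum_image hinj
    have hterm : ∀ l ∈ Finset.range (N + 1),
        (if m - l ≤ m ∧ m - (m - l) ≤ N then -(c' (m - (m - l))) else 0)
          * x ^ (m + 1 - (m - l)) = -(f l) := by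
      intro l hl
      have hl' := Finset.mem_range.mp hl
      have h1 : m - (m - l) = l := by omega
      have h2 : m + 1 - (m - l) = l + 1 := by omega
      rw [if_pos ⟨Nat.sub_le m l, by omega⟩, h1, h2, neg_mul, hcx' l hl]
    dsimp only
    rw [hstep, Finset.sum_congr rfl hterm, Finset.sum_neg_distrib, hfs]
    ring
end

section
/- Let A → B be a ring homomorphism of commutative rings making B into a finitely generated projective A-module of constant rank 1 (i.e., B is an invertible A-module). Then A → B is an isomorphism. -/
theorem stmt_9_general (A B : Type*) [CommRing A] [CommRing B] [Algebra A B]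
    (hinv : ∃ (C : Type) (_ : AddCommGroup C) (_ : Module A C),
      Nonempty ((TensorProduct A B C) ≃ₗ[A] A)) :
    Function.Bijective (algebraMap A B) := by
  obtain ⟨C, _, _, ⟨e⟩⟩ := hinv
  have : Module.Invertible A B := .left e
  exact (Module.Invertible.algEquivOfRing A B).bijective

theorem stmt_9 (A B : Type*) [CommRing A] [CommRing B] [Algebra A B]
    [Module.Finite A B] [Module.Projective A B]
    (hinv : ∃ (C : Type) (_ : AddCommGroup C) (_ : Module A C),
      Nonempty ((TensorProduct A B C) ≃ₗ[A] A)) :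
    Function.Bijective (algebraMap A B) :=
  stmt_9_general A B hinv
end
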